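/- Let q ≥ 2 be a real number and let u : ℝ³ → ℝ³ be continuously differentiable with compact support and div u(x) = 0 for all x ∈ ℝ³. Then ∫_{ℝ³} ‖u(x)‖^{q−2} · ⟨(u(x)·∇)u(x), u(x)⟩ dx = 0. -/

import Mathlib

/-!
The flux `‖u‖^q • u` has divergence `‖u‖^q div u + q ‖u‖^(q-2) ⟨(u·∇)u, u⟩`, and the first
term vanishes. The divergence of a compactly supported `C¹` field integrates to zero (integrate
each partial derivative by parts against the constant `1`), so `q` times the integral is zero.
-/

open MeasureTheory

section

variable {E F : Type*} [NormedAddCommGroup E] [NormedSpace ℝ E] [NormedAddCommGroup F]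
  [NormedSpace ℝ F]

theorem ContDiff.integrable_fderiv_apply [MeasurableSpace E] [OpensMeasurableSpace E]
    {f : E → F} (hf : ContDiff ℝ 1 f) (hcs : HasCompactSupport f) (μ : Measure E)
    [IsFiniteMeasureOnCompacts μ] (v : E) :
    Integrable (fun x ↦ fderiv ℝ f x v) μ :=
  ((hf.continuous_fderiv one_ne_zero).clm_apply continuous_const).integrable_of_hasCompactSupport
    (hcs.fderiv ℝ |>.comp_left (g := fun L : E →L[ℝ] F ↦ L v) rfl)

theorem ContDiff.integral_fderiv_apply_eq_zero [FiniteDimensional ℝ E] [MeasurableSpace E]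
    [BorelSpace E] {f : E → F} (hf : ContDiff ℝ 1 f) (hcs : HasCompactSupport f)
    (μ : Measure E) [μ.IsAddHaarMeasure] (v : E) :
    ∫ x, fderiv ℝ f x v ∂μ = 0 := by
  have h := integral_bilinear_fderiv_right_eq_neg_left_of_integrable (μ := μ) (v := v)
    (f := fun _ ↦ (1 : ℝ)) (B := ContinuousLinearMap.lsmul ℝ ℝ) (by simp)
    (by simpa using hf.integrable_fderiv_apply hcs μ v)
    (by simpa using hf.continuous.integrable_of_hasCompactSupport hcs)
    (fun _ _ ↦ differentiableAt_const _) (fun x _ ↦ hf.differentiable one_ne_zero x)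
  simpa using h

theorem fderiv_norm_rpow_apply {F : Type*} [NormedAddCommGroup F] [InnerProductSpace ℝ F]
    {u : E → F} {x : E} (hu : DifferentiableAt ℝ u x) {p : ℝ} (hp : 1 < p) (v : E) :
    fderiv ℝ (fun y ↦ ‖u y‖ ^ p) x v = p * ‖u x‖ ^ (p - 2) * inner ℝ (u x) (fderiv ℝ u x v) := by
  have h : HasFDerivAt (fun y ↦ ‖u y‖ ^ p) _ x :=
    (hasFDerivAt_norm_rpow (u x) hp).comp x hu.hasFDerivAt
  rw [h.fderiv]
  simp [mul_assoc]

end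

section

variable {ι : Type*} [Fintype ι] [DecidableEq ι]

noncomputable def divergence (F : EuclideanSpace ℝ ι → EuclideanSpace ℝ ι)
    (x : EuclideanSpace ℝ ι) : ℝ :=
  ∑ i, fderiv ℝ F x (EuclideanSpace.single i 1) i

theorem divergence_smul {g : EuclideanSpace ℝ ι → ℝ} {F : EuclideanSpace ℝ ι → EuclideanSpace ℝ ι}
    {x : EuclideanSpace ℝ ι} (hg : DifferentiableAt ℝ g x) (hF : DifferentiableAt ℝ F x) :
    divergence (fun y ↦ g y • F y) x = g x * divergence F x + fderiv ℝ g x (F x) := by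
  conv_rhs => rw [← (EuclideanSpace.basisFun ι ℝ).sum_repr (F x)]
  simp [divergence, fderiv_fun_smul hg hF, Finset.mul_sum, Finset.sum_add_distrib, mul_comm]

theorem ContDiff.integral_divergence_eq_zero {F : EuclideanSpace ℝ ι → EuclideanSpace ℝ ι}
    (hF : ContDiff ℝ 1 F) (hcs : HasCompactSupport F) (μ : Measure (EuclideanSpace ℝ ι))
    [μ.IsAddHaarMeasure] :
    ∫ x, divergence F x ∂μ = 0 := by
  have hint i := hF.integrable_fderiv_apply hcs μ (EuclideanSpace.single i 1)
  have hint_coord i : Integrable (fun x ↦ fderiv ℝ F x (EuclideanSpace.single i 1) i) μ :=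
    (EuclideanSpace.proj (𝕜 := ℝ) i).integrable_comp (hint i)
  have hint_coord_eq i : ∫ x, fderiv ℝ F x (EuclideanSpace.single i 1) i ∂μ = 0 := by
    have h := (EuclideanSpace.proj (𝕜 := ℝ) i).integral_comp_comm (hint i)
    rwa [hF.integral_fderiv_apply_eq_zero hcs μ, map_zero] at h
  simp only [divergence]
  rw [integral_finsetSum _ fun i _ ↦ hint_coord i]
  exact Finset.sum_eq_zero fun i _ ↦ hint_coord_eq i

end

/-- Let `q ≥ 2` be real and `u : ℝ³ → ℝ³` be `C¹` with compact support
and `div u = 0`. Then `∫_{ℝ³} ‖u(x)‖^{q−2} ⟨(u·∇)u(x), u(x)⟩ dx = 0`, where the power is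
the real power and `(u·∇)u` at `x` is the Fréchet derivative of `u` at `x` applied to
`u(x)`. -/
theorem stmt13 (q : ℝ) (hq : 2 ≤ q)
    (u : EuclideanSpace ℝ (Fin 3) → EuclideanSpace ℝ (Fin 3))
    (hu : ContDiff ℝ 1 u) (hcs : HasCompactSupport u)
    (hdiv : ∀ x, ∑ i : Fin 3, fderiv ℝ u x (EuclideanSpace.single i 1) i = 0) :
    ∫ x, ‖u x‖ ^ (q - 2) * (inner ℝ (fderiv ℝ u x (u x)) (u x) : ℝ) ∂volume = 0 := by
  have hq1 : 1 < q := by linarith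
  have hnorm := hu.norm_rpow hq1
  have hflux x : divergence (fun y ↦ ‖u y‖ ^ q • u y) x
      = q * (‖u x‖ ^ (q - 2) * inner ℝ (fderiv ℝ u x (u x)) (u x)) := by
    rw [divergence_smul (hnorm.differentiable one_ne_zero x) (hu.differentiable one_ne_zero x),
      show divergence u x = 0 from hdiv x,
      fderiv_norm_rpow_apply (hu.differentiable one_ne_zero x) hq1, real_inner_comm]
    ring
  have h : ∫ x, divergence (fun y ↦ ‖u y‖ ^ q • u y) x = 0 :=
    (hnorm.smul hu).integral_divergence_eq_zero hcs.smul_left volume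
  simp_rw [hflux, integral_const_mul] at h
  exact (mul_eq_zero.1 h).resolve_left (zero_lt_one.trans hq1).ne'
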